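/- Let L ∈ Σ[∂] be monic of order n ≥ 2 with constants C of characteristic zero. Then L is algebro-geometric (i.e. rank Z(L) = 1) if and only if n = |O|, where O is the group of order classes modulo n of nonzero elements of Z(L). In that case Z(L) has a C[L]-basis {A_0=1, A_1, ..., A_{n−1}} with ord(A_i) ≡ i (mod n). -/
import Mathlib


open scoped Classical
noncomputable section

variable {R : Type} [Ring R]

/-- Left multiplication by `a` as an additive endomorphism of `R`. -/
def mulOp (a : R) : AddMonoid.End R := AddMonoidHom.mulLeft a

/-- The derivation as an additive endomorphism. -/
def derOp (d : R →+ R) : AddMonoid.End R := d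

/-- `d` satisfies the Leibniz rule. -/
def IsDeriv (d : R →+ R) : Prop := ∀ a b : R, d (a * b) = d a * b + a * d b

/-- Additive group of differential operators of order at most `n`:
sums of terms `a · ∂^i` with `i ≤ n`. -/
def OpLE (d : R →+ R) (n : ℕ) : AddSubgroup (AddMonoid.End R) :=
  AddSubgroup.closure {P | ∃ (a : R) (i : ℕ), i ≤ n ∧ P = mulOp a * derOp d ^ i}

/-- `L` is a differential operator. -/
def IsOp (d : R →+ R) (L : AddMonoid.End R) : Prop := ∃ n, L ∈ OpLE d n

/-- `L` is a differential operator of exact order `n`. -/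
def HasOrd (d : R →+ R) (L : AddMonoid.End R) (n : ℕ) : Prop :=
  L ∈ OpLE d n ∧ ∀ k, L ∈ OpLE d k → n ≤ k

/-- `L` is a monic differential operator of order `n`. -/
def MonicOrd (d : R →+ R) (L : AddMonoid.End R) (n : ℕ) : Prop :=
  HasOrd d L n ∧ L - derOp d ^ n ∈ OpLE d (n - 1)

/-- The centralizer of `L` in the ring of differential operators. -/
def Cent (d : R →+ R) (L : AddMonoid.End R) : Set (AddMonoid.End R) :=
  {A | IsOp d A ∧ L * A = A * L}

/-- Polynomials in `L` with constant coefficients. -/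
def CPoly (d : R →+ R) (L : AddMonoid.End R) : Set (AddMonoid.End R) :=
  {P | ∃ p : Polynomial R, (∀ k, d (p.coeff k) = 0) ∧
      P = ∑ i ∈ Finset.range (p.natDegree + 1), mulOp (p.coeff i) * L ^ i}

/-- The level of `L`: smallest order of an element of `Z(L) \ C[L]`. -/
def Level (d : R →+ R) (L : AddMonoid.End R) (M : ℕ) : Prop :=
  (∃ Q ∈ Cent d L, Q ∉ CPoly d L ∧ HasOrd d Q M) ∧
  ∀ Q ∈ Cent d L, Q ∉ CPoly d L → ∀ q, HasOrd d Q q → M ≤ q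

section Basic
variable {F : Type} [Field F] {d : F →+ F}

example : Ring (AddMonoid.End F) := by infer_instance

lemma mulOp_apply (a x : F) : mulOp a x = a * x := rfl
lemma end_mul_apply (P Q : AddMonoid.End F) (x : F) : (P * Q) x = P (Q x) := rfl
lemma end_add_apply (P Q : AddMonoid.End F) (x : F) : (P + Q) x = P x + Q x := rfl
lemma end_sub_apply (P Q : AddMonoid.End F) (x : F) : (P - Q) x = P x - Q x := rfl
lemma end_neg_apply (P : AddMonoid.End F) (x : F) : (-P) x = -(P x) := rfl
lemma end_one_apply (x : F) : (1 : AddMonoid.End F) x = x := rfl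
lemma end_zero_apply (x : F) : (0 : AddMonoid.End F) x = 0 := rfl
lemma mulOp_add (a b : F) : mulOp (a+b) = mulOp a + mulOp b :=
  AddMonoidHom.ext fun x => add_mul a b x
lemma mulOp_zero : mulOp (0:F) = 0 := AddMonoidHom.ext fun x => zero_mul x
lemma mulOp_neg (a : F) : mulOp (-a) = - mulOp a := AddMonoidHom.ext fun x => neg_mul a x
lemma mulOp_one : mulOp (1:F) = 1 := AddMonoidHom.ext fun x => one_mul x
lemma mulOp_mul (a b : F) : mulOp (a*b) = mulOp a * mulOp b :=
  AddMonoidHom.ext fun x => mul_assoc a b x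
lemma mulOp_inj {a b : F} (h : mulOp a = mulOp b) : a = b := by
  have := congrArg (fun P : AddMonoid.End F => P 1) h
  simpa [mulOp_apply] using this
lemma der_mulOp (hd : IsDeriv d) (a : F) :
    derOp d * mulOp a = mulOp a * derOp d + mulOp (d a) :=
  AddMonoidHom.ext fun x => (hd a x).trans (add_comm _ _)
end Basic

section OpLE
variable {F : Type} [Field F] {d : F →+ F}

lemma gen_mem {a : F} {i n : ℕ} (h : i ≤ n) : mulOp a * derOp d ^ i ∈ OpLE d n :=
  AddSubgroup.subset_closure ⟨a, i, h, rfl⟩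

lemma opLE_mono {m n : ℕ} (h : m ≤ n) : OpLE d m ≤ OpLE d n := by
  apply AddSubgroup.closure_le _ |>.mpr
  rintro P ⟨a, i, hi, rfl⟩
  exact gen_mem (hi.trans h)

lemma derOp_pow_mem {i n : ℕ} (h : i ≤ n) : derOp d ^ i ∈ OpLE d n := by
  have := gen_mem (a := (1:F)) (d := d) h
  rwa [mulOp_one, one_mul] at this

lemma mulOp_mem (a : F) (n : ℕ) : mulOp a ∈ OpLE d n := by
  have := gen_mem (a := a) (d := d) (Nat.zero_le n)
  rwa [pow_zero, mul_one] at this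

lemma one_mem_opLE (n : ℕ) : (1 : AddMonoid.End F) ∈ OpLE d n := by
  have := mulOp_mem (d := d) (1:F) n; rwa [mulOp_one] at this

lemma mulOp_mul_opLE (a : F) {k : ℕ} {T : AddMonoid.End F} (hT : T ∈ OpLE d k) :
    mulOp a * T ∈ OpLE d k := by
  revert T
  have : OpLE d k ≤ (OpLE d k).comap (AddMonoidHom.mulLeft (mulOp a)) := by
    apply AddSubgroup.closure_le _ |>.mpr
    rintro P ⟨b, i, hi, rfl⟩
    rw [SetLike.mem_coe, AddSubgroup.mem_comap]
    show mulOp a * (mulOp b * derOp d ^ i) ∈ OpLE d k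
    rw [← mul_assoc, ← mulOp_mul]
    exact gen_mem hi
  exact fun T hT => this hT

lemma derOp_mul_opLE (hd : IsDeriv d) {k : ℕ} {T : AddMonoid.End F} (hT : T ∈ OpLE d k) :
    derOp d * T ∈ OpLE d (k+1) := by
  revert T
  have : OpLE d k ≤ (OpLE d (k+1)).comap (AddMonoidHom.mulLeft (derOp d)) := by
    apply AddSubgroup.closure_le _ |>.mpr
    rintro P ⟨b, i, hi, rfl⟩
    rw [SetLike.mem_coe, AddSubgroup.mem_comap]
    show derOp d * (mulOp b * derOp d ^ i) ∈ OpLE d (k+1)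
    rw [← mul_assoc, der_mulOp hd, add_mul, mul_assoc, ← pow_succ']
    exact AddSubgroup.add_mem _ (gen_mem (by omega)) (gen_mem (by omega))
  exact fun T hT => this hT

lemma derOp_pow_mul_opLE (hd : IsDeriv d) {i k : ℕ} {T : AddMonoid.End F} (hT : T ∈ OpLE d k) :
    derOp d ^ i * T ∈ OpLE d (i + k) := by
  induction i with
  | zero => simpa using hT
  | succ i ih =>
      rw [pow_succ', mul_assoc]
      have := derOp_mul_opLE hd ih
      have he : i + k + 1 = i + 1 + k := by omega
      rwa [he] at this

lemma opLE_mul_opLE (hd : IsDeriv d) {j k : ℕ} {P T : AddMonoid.End F}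
    (hP : P ∈ OpLE d j) (hT : T ∈ OpLE d k) : P * T ∈ OpLE d (j + k) := by
  revert P
  have : OpLE d j ≤ (OpLE d (j+k)).comap (AddMonoidHom.mulRight T) := by
    apply AddSubgroup.closure_le _ |>.mpr
    rintro P ⟨b, i, hi, rfl⟩
    rw [SetLike.mem_coe, AddSubgroup.mem_comap]
    show mulOp b * derOp d ^ i * T ∈ OpLE d (j+k)
    rw [mul_assoc]
    exact mulOp_mul_opLE b (opLE_mono (by omega) (derOp_pow_mul_opLE hd hT))
  exact fun P hP => this hP

/-- Operators of order `< m` (with `Low 0 = ⊥`). -/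
def Low (d : F →+ F) : ℕ → AddSubgroup (AddMonoid.End F)
  | 0 => ⊥
  | (m+1) => OpLE d m

lemma low_le_opLE {m : ℕ} : Low d m ≤ OpLE d m := by
  cases m with
  | zero => exact bot_le
  | succ m => exact opLE_mono (Nat.le_succ m)

lemma low_mono {m n : ℕ} (h : m ≤ n) : Low d m ≤ Low d n := by
  cases m with
  | zero => exact bot_le
  | succ m => cases n with
    | zero => omega
    | succ n => exact opLE_mono (by omega)

lemma opLE_le_low {m n : ℕ} (h : m < n) : OpLE d m ≤ Low d n := by
  cases n with
  | zero => omega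
  | succ n => exact opLE_mono (by omega)

lemma low_mul_opLE (hd : IsDeriv d) {j k : ℕ} {T S : AddMonoid.End F}
    (hT : T ∈ Low d j) (hS : S ∈ OpLE d k) : T * S ∈ Low d (j + k) := by
  cases j with
  | zero =>
      have h0 : T = 0 := by simpa [Low] using hT
      subst h0; rw [zero_mul]; exact zero_mem _
  | succ j =>
      have := opLE_mul_opLE hd hT hS
      exact opLE_le_low (by omega) this

lemma opLE_mul_low (hd : IsDeriv d) {j k : ℕ} {T S : AddMonoid.End F}
    (hT : T ∈ OpLE d j) (hS : S ∈ Low d k) : T * S ∈ Low d (j + k) := by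
  cases k with
  | zero =>
      have h0 : S = 0 := by simpa [Low] using hS
      subst h0; rw [mul_zero]; exact zero_mem _
  | succ k =>
      have := opLE_mul_opLE hd hT hS
      exact opLE_le_low (by omega) this

lemma mulOp_mul_low (a : F) {k : ℕ} {S : AddMonoid.End F} (hS : S ∈ Low d k) :
    mulOp a * S ∈ Low d k := by
  cases k with
  | zero =>
      have h0 : S = 0 := by simpa [Low] using hS
      subst h0; rw [mul_zero]; exact zero_mem _
  | succ k => exact mulOp_mul_opLE a hS

end OpLE

section Comm
variable {F : Type} [Field F] {d : F →+ F}

lemma comm_succ (hd : IsDeriv d) (b : F) :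
    ∀ i : ℕ, ∃ E ∈ Low d i, derOp d ^ (i+1) * mulOp b =
      mulOp b * derOp d ^ (i+1) + mulOp ((i+1) • d b) * derOp d ^ i + E := by
  intro i
  induction i with
  | zero =>
      refine ⟨0, zero_mem _, ?_⟩
      rw [pow_one, pow_zero, mul_one, add_zero, der_mulOp hd]; norm_num
  | succ i ih =>
      obtain ⟨E, hE, hEq⟩ := ih
      refine ⟨mulOp ((i+1) • d (d b)) * derOp d ^ i + derOp d * E, ?_, ?_⟩
      · refine AddSubgroup.add_mem _ (gen_mem (le_refl _)) ?_
        cases i with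
        | zero =>
            have h0 : E = 0 := by simpa [Low] using hE
            subst h0; rw [mul_zero]; exact zero_mem _
        | succ i =>
            exact opLE_mono (by omega) (derOp_mul_opLE hd hE)
      · have : derOp d ^ (i+1+1) * mulOp b = derOp d * (derOp d ^ (i+1) * mulOp b) := by
          rw [← mul_assoc, ← pow_succ']
        rw [this, hEq]
        rw [mul_add, mul_add, ← mul_assoc, ← mul_assoc, der_mulOp hd, der_mulOp hd]
        rw [add_mul, add_mul, mul_assoc, mul_assoc, ← pow_succ', ← pow_succ']
        have hsm : mulOp (d ((i+1) • d b)) = mulOp ((i+1) • d (d b)) := by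
          rw [AddMonoidHom.map_nsmul]
        rw [hsm]
        have hadd : mulOp ((i+1+1) • d b) = mulOp ((i+1) • d b) + mulOp (d b) := by
          rw [succ_nsmul, mulOp_add]
        rw [hadd, add_mul]
        abel
end Comm

section LC
variable {F : Type} [Field F] {d : F →+ F}

lemma comm_low (hd : IsDeriv d) (b : F) (i : ℕ) :
    derOp d ^ i * mulOp b - mulOp b * derOp d ^ i ∈ Low d i := by
  cases i with
  | zero => simp [Low, mul_comm, ← mulOp_mul, mul_comm b]
  | succ i =>
      obtain ⟨E, hE, hEq⟩ := comm_succ hd b i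
      rw [hEq]
      have h1 : mulOp b * derOp d ^ (i+1) + mulOp ((i+1) • d b) * derOp d ^ i + E
          - mulOp b * derOp d ^ (i+1) = mulOp ((i+1) • d b) * derOp d ^ i + E := by abel
      rw [h1]
      exact AddSubgroup.add_mem _ (gen_mem (le_refl _)) (low_le_opLE hE)

/-- `a` is a leading coefficient of `P` at level `m`. -/
def IsLC (d : F →+ F) (P : AddMonoid.End F) (m : ℕ) (a : F) : Prop :=
  P - mulOp a * derOp d ^ m ∈ Low d m

lemma isLC_zero (m : ℕ) : IsLC d (0 : AddMonoid.End F) m 0 := by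
  unfold IsLC; rw [mulOp_zero, zero_mul, sub_zero]; exact zero_mem _

lemma isLC_opLE {P : AddMonoid.End F} {m : ℕ} {a : F} (h : IsLC d P m a) : P ∈ OpLE d m := by
  have : P = (P - mulOp a * derOp d ^ m) + mulOp a * derOp d ^ m := by abel
  rw [this]
  exact AddSubgroup.add_mem _ (low_le_opLE h) (gen_mem (le_refl _))

lemma isLC_exists {P : AddMonoid.End F} {m : ℕ} (h : P ∈ OpLE d m) : ∃ a, IsLC d P m a := by
  revert P
  let S : AddSubgroup (AddMonoid.End F) := {
    carrier := {P | ∃ a : F, IsLC d P m a}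
    zero_mem' := ⟨0, isLC_zero m⟩
    add_mem' := by
      rintro P Q ⟨a, ha⟩ ⟨b, hb⟩
      refine ⟨a + b, ?_⟩
      unfold IsLC at *
      have : P + Q - mulOp (a+b) * derOp d ^ m =
          (P - mulOp a * derOp d ^ m) + (Q - mulOp b * derOp d ^ m) := by
        rw [mulOp_add, add_mul]; abel
      rw [this]; exact AddSubgroup.add_mem _ ha hb
    neg_mem' := by
      rintro P ⟨a, ha⟩
      refine ⟨-a, ?_⟩
      unfold IsLC at *
      have : -P - mulOp (-a) * derOp d ^ m = -(P - mulOp a * derOp d ^ m) := by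
        rw [mulOp_neg, neg_mul (mulOp a) (derOp d ^ m)]; abel
      rw [this]; exact AddSubgroup.neg_mem _ ha }
  have hle : OpLE d m ≤ S := by
    apply AddSubgroup.closure_le _ |>.mpr
    rintro P ⟨a, i, hi, rfl⟩
    rcases Nat.lt_or_ge i m with hlt | hge
    · refine ⟨0, ?_⟩
      unfold IsLC; rw [mulOp_zero, zero_mul, sub_zero]
      exact opLE_le_low hlt (gen_mem (le_refl _))
    · have : i = m := le_antisymm hi hge
      subst this
      refine ⟨a, ?_⟩
      unfold IsLC; rw [sub_self]; exact zero_mem _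
  intro P h
  exact hle h

lemma isLC_mul (hd : IsDeriv d) {P Q : AddMonoid.End F} {j k : ℕ} {α β : F}
    (hP : IsLC d P j α) (hQ : IsLC d Q k β) : IsLC d (P * Q) (j+k) (α*β) := by
  unfold IsLC at *
  set p := P - mulOp α * derOp d ^ j with hp
  set q := Q - mulOp β * derOp d ^ k with hq
  have hQk : Q ∈ OpLE d k := isLC_opLE hQ
  have key : P * Q - mulOp (α*β) * derOp d ^ (j+k) =
      p * Q + (mulOp α * derOp d ^ j) * q +
        mulOp α * (derOp d ^ j * mulOp β - mulOp β * derOp d ^ j) * derOp d ^ k := by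
    rw [hp, hq, mulOp_mul, pow_add]
    simp only [sub_mul, mul_sub, mul_assoc]
    abel
  rw [key]
  refine AddSubgroup.add_mem _ (AddSubgroup.add_mem _ ?_ ?_) ?_
  · exact low_mul_opLE hd hP hQk
  · have := opLE_mul_low hd (gen_mem (d := d) (a := α) (i := j) (le_refl _)) hQ
    exact this
  · have hcomm := comm_low hd β j
    have := low_mul_opLE hd (mulOp_mul_low α hcomm) (derOp_pow_mem (d := d) (le_refl k))
    exact this

end LC

section Ind
variable {F : Type} [Field F] {d : F →+ F}

lemma comm_opLE (hd : IsDeriv d) {j k : ℕ} {P Q : AddMonoid.End F}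
    (hP : P ∈ OpLE d j) (hQ : Q ∈ OpLE d k) : P * Q - Q * P ∈ Low d (j + k) := by
  obtain ⟨a, ha⟩ := isLC_exists hP
  obtain ⟨b, hb⟩ := isLC_exists hQ
  have h1 := isLC_mul hd ha hb
  have h2 := isLC_mul hd hb ha
  unfold IsLC at h1 h2
  rw [mul_comm b a] at h2
  rw [Nat.add_comm k j] at h2
  have : P * Q - Q * P = (P * Q - mulOp (a*b) * derOp d ^ (j+k))
      - (Q * P - mulOp (a*b) * derOp d ^ (j+k)) := by abel
  rw [this]
  exact AddSubgroup.sub_mem _ h1 h2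

lemma ind [CharZero F] (hd : IsDeriv d) {x : F} (hx : d x ≠ 0) :
    ∀ m : ℕ, ∀ c : F, mulOp c * derOp d ^ m ∈ Low d m → c = 0 := by
  intro m
  induction m with
  | zero =>
      intro c hc
      rw [pow_zero, mul_one] at hc
      have h0 : mulOp c = 0 := by simpa [Low] using hc
      have := congrArg (fun P : AddMonoid.End F => P 1) h0
      simpa [mulOp_apply, end_zero_apply] using this
  | succ m ih =>
      intro c hc
      -- commutator of c∂^{m+1} with mulOp x
      obtain ⟨E, hE, hEq⟩ := comm_succ hd x m
      set P := mulOp c * derOp d ^ (m+1) with hPdef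
      have hPop : P ∈ OpLE d m := hc
      have hT : P * mulOp x - mulOp x * P ∈ Low d m := by
        have := comm_opLE hd hPop (mulOp_mem (d := d) x 0)
        simpa using this
      -- compute the commutator explicitly
      have hcomp : P * mulOp x - mulOp x * P =
          mulOp (c * ((m+1) • d x)) * derOp d ^ m + mulOp c * E := by
        rw [hPdef]
        have h1 : mulOp c * derOp d ^ (m+1) * mulOp x =
            mulOp c * (derOp d ^ (m+1) * mulOp x) := by rw [mul_assoc]
        rw [h1, hEq]
        rw [mul_add, mul_add]
        rw [← mul_assoc (mulOp c) (mulOp x), ← mul_assoc (mulOp c) (mulOp ((m+1) • d x)),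
            ← mul_assoc (mulOp x) (mulOp c), ← mulOp_mul, ← mulOp_mul, ← mulOp_mul,
            mul_comm x c]
        abel
      have hmem : mulOp (c * ((m+1) • d x)) * derOp d ^ m ∈ Low d m := by
        have hcE : mulOp c * E ∈ Low d m := mulOp_mul_low c hE
        have : mulOp (c * ((m+1) • d x)) * derOp d ^ m =
            (P * mulOp x - mulOp x * P) - mulOp c * E := by rw [hcomp]; abel
        rw [this]
        exact AddSubgroup.sub_mem _ hT hcE
      have := ih _ hmem
      have hne : ((m+1) • d x) ≠ 0 := by
        rw [nsmul_eq_mul]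
        have hcast : ((m+1 : ℕ) : F) ≠ 0 := Nat.cast_ne_zero.mpr (Nat.succ_ne_zero m)
        exact mul_ne_zero hcast hx
      exact (mul_eq_zero.mp this).resolve_right hne

lemma isLC_unique [CharZero F] (hd : IsDeriv d) {x : F} (hx : d x ≠ 0)
    {P : AddMonoid.End F} {m : ℕ} {a b : F} (ha : IsLC d P m a) (hb : IsLC d P m b) :
    a = b := by
  unfold IsLC at ha hb
  have : mulOp (a - b) * derOp d ^ m ∈ Low d m := by
    have h := AddSubgroup.sub_mem _ hb ha
    have he : P - mulOp b * derOp d ^ m - (P - mulOp a * derOp d ^ m) =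
        mulOp (a - b) * derOp d ^ m := by
      rw [sub_eq_add_neg a b, mulOp_add, mulOp_neg, add_mul,
        neg_mul (mulOp b) (derOp d ^ m)]; abel
    rwa [he] at h
  have := ind hd hx m _ this
  exact sub_eq_zero.mp this

end Ind


section Ord
variable {F : Type} [Field F] {d : F →+ F}

lemma hasOrd_unique {P : AddMonoid.End F} {m m' : ℕ}
    (h : HasOrd d P m) (h' : HasOrd d P m') : m = m' :=
  le_antisymm (h.2 m' h'.1) (h'.2 m h.1)

lemma ord_exists {P : AddMonoid.End F} (h : IsOp d P) : ∃ m, HasOrd d P m := by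
  classical
  exact ⟨Nat.find h, Nat.find_spec h, fun k hk => Nat.find_le hk⟩

lemma hasOrd_one : HasOrd d (1 : AddMonoid.End F) 0 :=
  ⟨one_mem_opLE 0, fun k _ => Nat.zero_le k⟩

/-- if `P` has a nonzero leading coefficient at `m`, then `P` has order `m`. -/
lemma hasOrd_of_isLC [CharZero F] (hd : IsDeriv d) {x : F} (hx : d x ≠ 0)
    {P : AddMonoid.End F} {m : ℕ} {a : F} (h : IsLC d P m a) (ha : a ≠ 0) :
    HasOrd d P m := by
  refine ⟨isLC_opLE h, fun k hk => ?_⟩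
  by_contra hlt
  push_neg at hlt
  have hPlow : P ∈ Low d m := opLE_le_low hlt (opLE_mono (le_refl k) hk)
  have : mulOp a * derOp d ^ m ∈ Low d m := by
    have h2 : mulOp a * derOp d ^ m = P - (P - mulOp a * derOp d ^ m) := by abel
    rw [h2]
    exact AddSubgroup.sub_mem _ hPlow h
  exact ha (ind hd hx m a this)

lemma isLC_of_hasOrd {P : AddMonoid.End F} {m : ℕ} (h : HasOrd d P m) (hP : P ≠ 0) :
    ∃ a, IsLC d P m a ∧ a ≠ 0 := by
  obtain ⟨a, ha⟩ := isLC_exists h.1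
  refine ⟨a, ha, ?_⟩
  rintro rfl
  unfold IsLC at ha
  rw [mulOp_zero, zero_mul, sub_zero] at ha
  cases m with
  | zero => exact hP (by simpa [Low] using ha)
  | succ m =>
      have := h.2 m ha
      omega

/-- a nonzero derivation exists, given an operator of positive exact order. -/
lemma d_ne_zero {L : AddMonoid.End F} {n : ℕ} (hn : 1 ≤ n) (hL : HasOrd d L n) :
    ∃ x : F, d x ≠ 0 := by
  by_contra hall
  push_neg at hall
  have hd0 : derOp d = 0 := AddMonoidHom.ext fun x => hall x
  have : L ∈ OpLE d 0 := by
    have hle : OpLE d n ≤ OpLE d 0 := by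
      apply AddSubgroup.closure_le _ |>.mpr
      rintro P ⟨a, i, hi, rfl⟩
      cases i with
      | zero =>
          rw [pow_zero, mul_one]
          exact mulOp_mem a 0
      | succ i =>
          rw [hd0, zero_pow (Nat.succ_ne_zero i), mul_zero]
          exact zero_mem _
    exact hle hL.1
  have := hL.2 0 this
  omega

lemma one_ne_zero_End : (1 : AddMonoid.End F) ≠ 0 := by
  intro h
  have := congrArg (fun P : AddMonoid.End F => P 1) h
  simp [end_one_apply, end_zero_apply] at this

end Ord

section CentS
variable {F : Type} [Field F] {d : F →+ F} {L : AddMonoid.End F}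

lemma cent_one : (1 : AddMonoid.End F) ∈ Cent d L :=
  ⟨⟨0, one_mem_opLE 0⟩, by rw [mul_one, one_mul]⟩

lemma cent_self (h : IsOp d L) : L ∈ Cent d L := ⟨h, rfl⟩

lemma cent_sub {P Q : AddMonoid.End F} (hP : P ∈ Cent d L) (hQ : Q ∈ Cent d L) :
    P - Q ∈ Cent d L := by
  obtain ⟨⟨p, hp⟩, hPc⟩ := hP
  obtain ⟨⟨q, hq⟩, hQc⟩ := hQ
  refine ⟨⟨max p q, ?_⟩, ?_⟩
  · exact AddSubgroup.sub_mem _ (opLE_mono (le_max_left p q) hp)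
      (opLE_mono (le_max_right p q) hq)
  · rw [mul_sub, sub_mul, hPc, hQc]

lemma cent_mul (hd : IsDeriv d) {P Q : AddMonoid.End F}
    (hP : P ∈ Cent d L) (hQ : Q ∈ Cent d L) : P * Q ∈ Cent d L := by
  obtain ⟨⟨p, hp⟩, hPc⟩ := hP
  obtain ⟨⟨q, hq⟩, hQc⟩ := hQ
  refine ⟨⟨p + q, opLE_mul_opLE hd hp hq⟩, ?_⟩
  rw [← mul_assoc, hPc, mul_assoc, hQc, mul_assoc]

lemma cent_pow (hd : IsDeriv d) {P : AddMonoid.End F} (hP : P ∈ Cent d L) (k : ℕ) :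
    P ^ k ∈ Cent d L := by
  induction k with
  | zero => simpa [pow_zero] using cent_one
  | succ k ih => rw [pow_succ]; exact cent_mul hd ih hP

/-- constants commute with differential operators. -/
lemma mulOp_const_comm (hd : IsDeriv d) {c : F} (hc : d c = 0)
    {T : AddMonoid.End F} (hT : IsOp d T) : T * mulOp c = mulOp c * T := by
  obtain ⟨k, hk⟩ := hT
  revert hk
  have key : ∀ i : ℕ, derOp d ^ i * mulOp c = mulOp c * derOp d ^ i := by
    intro i
    induction i with
    | zero => rw [pow_zero, one_mul, mul_one]
    | succ i ih =>
        rw [pow_succ, mul_assoc, der_mulOp hd c, hc, mulOp_zero, add_zero,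
            ← mul_assoc, ih, mul_assoc]
  let S : AddSubgroup (AddMonoid.End F) := {
    carrier := {T | T * mulOp c = mulOp c * T}
    zero_mem' := by simp
    add_mem' := by
      intro A B hA hB
      simp only [Set.mem_setOf_eq] at *
      rw [add_mul, mul_add, hA, hB]
    neg_mem' := by
      intro A hA
      simp only [Set.mem_setOf_eq] at *
      rw [neg_mul A (mulOp c), mul_neg (mulOp c) A, hA] }
  have hS : OpLE d k ≤ S := by
    apply AddSubgroup.closure_le _ |>.mpr
    rintro P ⟨a, i, hi, rfl⟩
    show mulOp a * derOp d ^ i * mulOp c = mulOp c * (mulOp a * derOp d ^ i)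
    rw [mul_assoc, key i, ← mul_assoc, ← mulOp_mul, ← mul_assoc, ← mulOp_mul, mul_comm a c]
  intro hk
  exact hS hk

lemma cent_mulOp_const (hd : IsDeriv d) {c : F} (hc : d c = 0) (hL : IsOp d L) :
    mulOp c ∈ Cent d L :=
  ⟨⟨0, mulOp_mem c 0⟩, mulOp_const_comm hd hc hL⟩

/-- Leading coefficients of centralizer elements are constants. -/
lemma const_lc [CharZero F] (hd : IsDeriv d) {n : ℕ} (hn : 2 ≤ n)
    (hL : MonicOrd d L n) {Q : AddMonoid.End F} (hQ : Q ∈ Cent d L)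
    {m : ℕ} {q : F} (hlc : IsLC d Q m q) : d q = 0 := by
  obtain ⟨x, hx⟩ := d_ne_zero (by omega) hL.1
  -- decompositions
  set R0 := L - derOp d ^ n with hR0
  have hR0mem : R0 ∈ OpLE d (n-1) := hL.2
  set S0 := Q - mulOp q * derOp d ^ m with hS0
  have hS0mem : S0 ∈ Low d m := hlc
  obtain ⟨E, hE, hEq⟩ := comm_succ hd q (n-1)
  have hn1 : n - 1 + 1 = n := by omega
  rw [hn1] at hEq
  -- the commutator is zero
  have hcomm0 : L * Q - Q * L = 0 := by rw [hQ.2]; abel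
  -- expand the commutator
  have hexp : L * Q - Q * L =
      (derOp d ^ n * mulOp q - mulOp q * derOp d ^ n) * derOp d ^ m
      + (derOp d ^ n * S0 - S0 * derOp d ^ n)
      + (R0 * Q - Q * R0) := by
    have hL' : L = derOp d ^ n + R0 := by rw [hR0]; abel
    have hQ' : Q = mulOp q * derOp d ^ m + S0 := by rw [hS0]; abel
    rw [hL', hQ']
    simp only [add_mul, mul_add, sub_mul, mul_sub, mul_assoc, ← pow_add]
    rw [add_comm m n]
    abel
  -- main term
  have hmain : (derOp d ^ n * mulOp q - mulOp q * derOp d ^ n) * derOp d ^ m =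
      mulOp ((n : ℕ) • d q) * derOp d ^ (n - 1 + m) + E * derOp d ^ m := by
    rw [hEq]
    have : mulOp q * derOp d ^ n + mulOp ((n : ℕ) • d q) * derOp d ^ (n-1) + E
        - mulOp q * derOp d ^ n = mulOp ((n : ℕ) • d q) * derOp d ^ (n-1) + E := by abel
    rw [this, add_mul, mul_assoc, ← pow_add]
  -- collect the lower order terms
  have hlow1 : E * derOp d ^ m ∈ Low d (n - 1 + m) :=
    low_mul_opLE hd hE (derOp_pow_mem (le_refl m))
  have hlow2 : derOp d ^ n * S0 - S0 * derOp d ^ n ∈ Low d (n - 1 + m) := by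
    cases hm : m with
    | zero =>
        subst hm
        have h0 : S0 = 0 := by simpa [Low] using hS0mem
        rw [h0, mul_zero, zero_mul, sub_zero]
        exact zero_mem _
    | succ m' =>
        subst hm
        have hS0' : S0 ∈ OpLE d m' := hS0mem
        have := comm_opLE hd (derOp_pow_mem (d := d) (le_refl n)) hS0'
        exact low_mono (by omega) this
  have hlow3 : R0 * Q - Q * R0 ∈ Low d (n - 1 + m) := by
    have hQm : Q ∈ OpLE d m := isLC_opLE hlc
    have := comm_opLE hd hR0mem hQm
    exact low_mono (by omega) this
  -- conclude
  have hfin : mulOp ((n : ℕ) • d q) * derOp d ^ (n - 1 + m) ∈ Low d (n - 1 + m) := by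
    have h1 : mulOp ((n : ℕ) • d q) * derOp d ^ (n - 1 + m) =
        (L * Q - Q * L) - (E * derOp d ^ m)
        - (derOp d ^ n * S0 - S0 * derOp d ^ n) - (R0 * Q - Q * R0) := by
      rw [hexp, hmain]; abel
    rw [h1]
    refine AddSubgroup.sub_mem _ (AddSubgroup.sub_mem _ (AddSubgroup.sub_mem _ ?_ hlow1) hlow2) hlow3
    rw [hcomm0]; exact zero_mem _
  have := ind hd hx _ _ hfin
  have hne : ((n : ℕ) : F) ≠ 0 := Nat.cast_ne_zero.mpr (by omega)
  rw [nsmul_eq_mul] at this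
  exact (mul_eq_zero.mp this).resolve_left hne

end CentS

section CP
variable {F : Type} [Field F] {d : F →+ F} {L : AddMonoid.End F}

lemma cpoly_iff {P : AddMonoid.End F} :
    P ∈ CPoly d L ↔ ∃ (N : ℕ) (f : ℕ → F), (∀ k, d (f k) = 0) ∧
      P = ∑ i ∈ Finset.range N, mulOp (f i) * L ^ i := by
  constructor
  · rintro ⟨p, hp, rfl⟩
    exact ⟨p.natDegree + 1, fun i => p.coeff i, hp, rfl⟩
  · rintro ⟨N, f, hf, rfl⟩
    set p : Polynomial F := ∑ i ∈ Finset.range N, Polynomial.C (f i) * Polynomial.X ^ i with hpdef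
    have hcoeff : ∀ k, p.coeff k = if k < N then f k else 0 := by
      intro k
      rw [hpdef, Polynomial.finset_sum_coeff]
      have : ∀ i ∈ Finset.range N, (Polynomial.C (f i) * Polynomial.X ^ i).coeff k =
          if i = k then f i else 0 := by
        intro i _
        rw [Polynomial.coeff_C_mul, Polynomial.coeff_X_pow]
        by_cases h : k = i
        · subst h; simp
        · simp [h, Ne.symm h]
      rw [Finset.sum_congr rfl this, Finset.sum_ite_eq' (Finset.range N) k f]
      simp [Finset.mem_range]
    refine ⟨p, ?_, ?_⟩
    · intro k
      rw [hcoeff k]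
      by_cases h : k < N
      · simp [h, hf k]
      · simp [h]
    · -- both sums equal the sum over a common large range
      set M := max N (p.natDegree + 1) with hM
      have h1 : ∑ i ∈ Finset.range N, mulOp (f i) * L ^ i =
          ∑ i ∈ Finset.range M, mulOp (p.coeff i) * L ^ i := by
        have e1 : ∑ i ∈ Finset.range N, mulOp (f i) * L ^ i =
            ∑ i ∈ Finset.range N, mulOp (p.coeff i) * L ^ i :=
          Finset.sum_congr rfl (fun i hi => by
            rw [hcoeff i, if_pos (Finset.mem_range.mp hi)])
        rw [e1]
        apply Finset.sum_subset (Finset.range_subset_range.mpr (le_max_left N (p.natDegree + 1)))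
        intro i _ hi
        rw [hcoeff i, if_neg (fun h => hi (Finset.mem_range.mpr h)), mulOp_zero, zero_mul]
      have h2 : ∑ i ∈ Finset.range (p.natDegree + 1), mulOp (p.coeff i) * L ^ i =
          ∑ i ∈ Finset.range M, mulOp (p.coeff i) * L ^ i := by
        apply Finset.sum_subset (Finset.range_subset_range.mpr (le_max_right N (p.natDegree + 1)))
        intro i _ hi
        have : p.natDegree < i := by
          simp only [Finset.mem_range, not_lt] at hi
          omega
        rw [Polynomial.coeff_eq_zero_of_natDegree_lt this, mulOp_zero, zero_mul]
      rw [h1, h2]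

lemma cpoly_zero : (0 : AddMonoid.End F) ∈ CPoly d L := by
  rw [cpoly_iff]
  exact ⟨0, fun _ => 0, fun k => d.map_zero, by simp⟩

lemma cpoly_single {c : F} (hc : d c = 0) (k : ℕ) : mulOp c * L ^ k ∈ CPoly d L := by
  rw [cpoly_iff]
  refine ⟨k + 1, fun i => if i = k then c else 0, ?_, ?_⟩
  · intro j; by_cases h : j = k <;> simp [h, hc, d.map_zero]
  · have e1 : ∀ i ∈ Finset.range (k+1), mulOp (if i = k then c else 0) * L ^ i =
        if i = k then mulOp c * L ^ i else 0 := by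
      intro i _
      by_cases h : i = k
      · rw [if_pos h, if_pos h]
      · rw [if_neg h, if_neg h, mulOp_zero, zero_mul]
    rw [Finset.sum_congr rfl e1,
      Finset.sum_ite_eq' (Finset.range (k+1)) k (fun i => mulOp c * L ^ i),
      if_pos (Finset.mem_range.mpr (Nat.lt_succ_self k))]

lemma sum_cut (f : ℕ → F) {N M : ℕ} (h : N ≤ M) :
    ∑ i ∈ Finset.range M, mulOp (if i < N then f i else 0) * L ^ i =
    ∑ i ∈ Finset.range N, mulOp (f i) * L ^ i := by
  rw [← Finset.sum_subset (Finset.range_subset_range.mpr h)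
    (fun i _ hi => by
      rw [if_neg (fun hl => hi (Finset.mem_range.mpr hl)), mulOp_zero, zero_mul])]
  exact Finset.sum_congr rfl fun i hi => by rw [if_pos (Finset.mem_range.mp hi)]

lemma cpoly_add {P Q : AddMonoid.End F} (hP : P ∈ CPoly d L) (hQ : Q ∈ CPoly d L) :
    P + Q ∈ CPoly d L := by
  rw [cpoly_iff] at *
  obtain ⟨N, f, hf, rfl⟩ := hP
  obtain ⟨M, g, hg, rfl⟩ := hQ
  refine ⟨max N M, fun i => (if i < N then f i else 0) + (if i < M then g i else 0), ?_, ?_⟩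
  · intro k
    rw [d.map_add]
    have e1 : d (if k < N then f k else 0) = 0 := by
      by_cases h : k < N
      · rw [if_pos h]; exact hf k
      · rw [if_neg h]; exact d.map_zero
    have e2 : d (if k < M then g k else 0) = 0 := by
      by_cases h : k < M
      · rw [if_pos h]; exact hg k
      · rw [if_neg h]; exact d.map_zero
    rw [e1, e2, add_zero]
  · have esplit : ∀ i ∈ Finset.range (max N M),
        mulOp ((if i < N then f i else 0) + (if i < M then g i else 0)) * L ^ i =
        mulOp (if i < N then f i else 0) * L ^ i + mulOp (if i < M then g i else 0) * L ^ i := by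
      intro i _
      rw [mulOp_add, add_mul]
    rw [Finset.sum_congr rfl esplit, Finset.sum_add_distrib,
      sum_cut f (le_max_left N M), sum_cut g (le_max_right N M)]

end CP

section CPOrd
variable {F : Type} [Field F] {d : F →+ F} {L : AddMonoid.End F} {n : ℕ}

lemma isLC_mulOp (a : F) : IsLC d (mulOp a) 0 a := by
  unfold IsLC
  rw [pow_zero, mul_one, sub_self]
  exact zero_mem _

lemma low_eq {m : ℕ} (hm : 1 ≤ m) : Low d m = OpLE d (m - 1) := by
  cases m with
  | zero => omega
  | succ m => rfl

lemma isLC_L (hn : 1 ≤ n) (hL : MonicOrd d L n) : IsLC d L n 1 := by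
  unfold IsLC
  rw [mulOp_one, one_mul, low_eq hn]
  exact hL.2

lemma isLC_one : IsLC d (1 : AddMonoid.End F) 0 1 := by
  have := isLC_mulOp (d := d) (1 : F)
  rwa [mulOp_one] at this

lemma isLC_Lpow (hd : IsDeriv d) (hn : 1 ≤ n) (hL : MonicOrd d L n) (k : ℕ) :
    IsLC d (L ^ k) (n * k) 1 := by
  induction k with
  | zero => rw [pow_zero, Nat.mul_zero]; exact isLC_one
  | succ k ih =>
      have := isLC_mul hd ih (isLC_L hn hL)
      rw [pow_succ, mul_one] at *
      have he : n * k + n = n * (k+1) := by ring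
      rwa [he] at this

/-- nonzero elements of `CPoly` have order a multiple of `n`, with constant
leading coefficient. -/
lemma cpoly_ord (hd : IsDeriv d) (hn : 1 ≤ n) (hL : MonicOrd d L n)
    {c : AddMonoid.End F} (hc : c ∈ CPoly d L) (hc0 : c ≠ 0) :
    ∃ (D : ℕ) (β : F), IsLC d c (n * D) β ∧ β ≠ 0 ∧ d β = 0 := by
  rw [cpoly_iff] at hc
  obtain ⟨N, f, hf, rfl⟩ := hc
  set S := (Finset.range N).filter (fun i => f i ≠ 0) with hS
  have hSne : S.Nonempty := by
    by_contra hemp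
    rw [Finset.not_nonempty_iff_eq_empty] at hemp
    apply hc0
    apply Finset.sum_eq_zero
    intro i hi
    have : f i = 0 := by
      by_contra hfi
      have : i ∈ S := Finset.mem_filter.mpr ⟨hi, hfi⟩
      rw [hemp] at this
      exact absurd this (Finset.notMem_empty i)
    rw [this, mulOp_zero, zero_mul]
  set D := S.max' hSne with hD
  have hDS : D ∈ S := S.max'_mem hSne
  have hDN : D < N := Finset.mem_range.mp (Finset.mem_filter.mp hDS).1
  have hfD : f D ≠ 0 := (Finset.mem_filter.mp hDS).2
  refine ⟨D, f D, ?_, hfD, hf D⟩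
  unfold IsLC
  have hsplit : ∑ i ∈ Finset.range N, mulOp (f i) * L ^ i =
      (∑ i ∈ Finset.range N \ {D}, mulOp (f i) * L ^ i) + mulOp (f D) * L ^ D :=
    (Finset.sum_eq_sum_sdiff_singleton_add (Finset.mem_range.mpr hDN) _)
  rw [hsplit]
  have hterm : mulOp (f D) * L ^ D - mulOp (f D) * derOp d ^ (n * D) ∈ Low d (n * D) := by
    have h1 : IsLC d (mulOp (f D) * L ^ D) (0 + n * D) (f D * 1) :=
      isLC_mul hd (isLC_mulOp (f D)) (isLC_Lpow hd hn hL D)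
    rw [Nat.zero_add, mul_one] at h1
    exact h1
  have hrest : (∑ i ∈ Finset.range N \ {D}, mulOp (f i) * L ^ i) ∈ Low d (n * D) := by
    apply AddSubgroup.sum_mem
    intro i hi
    obtain ⟨hiN, hiD⟩ := Finset.mem_sdiff.mp hi
    by_cases hfi : f i = 0
    · rw [hfi, mulOp_zero, zero_mul]; exact zero_mem _
    · have hiS : i ∈ S := Finset.mem_filter.mpr ⟨hiN, hfi⟩
      have hile : i ≤ D := S.le_max' i hiS
      have hilt : i < D := lt_of_le_of_ne hile (by simpa using hiD)
      have h1 : IsLC d (mulOp (f i) * L ^ i) (0 + n * i) (f i * 1) :=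
        isLC_mul hd (isLC_mulOp (f i)) (isLC_Lpow hd hn hL i)
      have h2 := isLC_opLE h1
      rw [Nat.zero_add] at h2
      exact opLE_le_low (by
        have : n * i < n * D := (Nat.mul_lt_mul_left (by omega : 0 < n)).mpr hilt
        omega) h2
  have : ∑ i ∈ Finset.range N \ {D}, mulOp (f i) * L ^ i + mulOp (f D) * L ^ D -
      mulOp (f D) * derOp d ^ (n * D) =
      (∑ i ∈ Finset.range N \ {D}, mulOp (f i) * L ^ i) +
      (mulOp (f D) * L ^ D - mulOp (f D) * derOp d ^ (n * D)) := by abel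
  rw [this]
  exact AddSubgroup.add_mem _ hrest hterm

end CPOrd

section Deriv
variable {F : Type} [Field F] {d : F →+ F}

lemma d_one (hd : IsDeriv d) : d 1 = 0 := by
  have h := hd 1 1
  rw [mul_one, mul_one, one_mul] at h
  have h2 : d 1 + d 1 = d 1 + 0 := by rw [add_zero]; exact h.symm
  exact add_left_cancel h2

lemma d_inv (hd : IsDeriv d) {a : F} (ha : a ≠ 0) (hda : d a = 0) : d a⁻¹ = 0 := by
  have h1 : d (a * a⁻¹) = 0 := by rw [mul_inv_cancel₀ ha]; exact d_one hd
  rw [hd a a⁻¹, hda, zero_mul, zero_add] at h1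
  rcases mul_eq_zero.mp h1 with h | h
  · exact absurd h ha
  · exact h

end Deriv

theorem main_statement {F : Type} [Field F] [CharZero F]
    (d : F →+ F) (hd : IsDeriv d) (L : AddMonoid.End F) (n : ℕ) (hn : 2 ≤ n)
    (hL : MonicOrd d L n) (H : AddSubgroup (ZMod n))
    (hH : (H : Set (ZMod n)) =
      {x | ∃ Q ∈ Cent d L, Q ≠ 0 ∧ ∃ m : ℕ, HasOrd d Q m ∧ x = (m : ZMod n)}) :
    ((∀ e : ℕ, (∀ m : ℕ, (∃ Q ∈ Cent d L, Q ≠ 0 ∧ HasOrd d Q m) → e ∣ m) → e = 1) ↔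
      Nat.card H = n) ∧
    (Nat.card H = n →
      ∃ (A : ℕ → AddMonoid.End F) (o : ℕ → ℕ),
        A 0 = 1 ∧
        (∀ i < n, A i ∈ Cent d L ∧ HasOrd d (A i) (o i) ∧
          ((o i : ZMod n) = (i : ZMod n)) ∧
          (∀ Q ∈ Cent d L, Q ≠ 0 → ∀ q : ℕ, HasOrd d Q q →
            (q : ZMod n) = (o i : ZMod n) → o i ≤ q)) ∧
        (∀ Q ∈ Cent d L, ∃ c : ℕ → AddMonoid.End F,
          (∀ i, c i ∈ CPoly d L) ∧ Q = ∑ i ∈ Finset.range n, c i * A i) ∧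
        (∀ c : ℕ → AddMonoid.End F, (∀ i, c i ∈ CPoly d L) →
          ∑ i ∈ Finset.range n, c i * A i = 0 → ∀ i < n, c i = 0)) := by
  haveI : NeZero n := ⟨by omega⟩
  obtain ⟨x, hx⟩ := d_ne_zero (d := d) (by omega) hL.1
  have hLord : HasOrd d L n := hL.1
  have hLop : IsOp d L := ⟨n, hLord.1⟩
  have hLcent : L ∈ Cent d L := cent_self hLop
  have hL0 : L ≠ 0 := by
    rintro rfl
    exact absurd (hLord.2 0 (zero_mem _)) (by omega)
  have hmemH : ∀ m : ℕ, (∃ Q ∈ Cent d L, Q ≠ 0 ∧ HasOrd d Q m) → ((m : ZMod n) ∈ H) := by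
    intro m ⟨Q, hQ, hQ0, hord⟩
    have : (m : ZMod n) ∈ (H : Set (ZMod n)) := by
      rw [hH]; exact ⟨Q, hQ, hQ0, m, hord, rfl⟩
    exact this
  -- Part 1
  have part1 : (∀ e : ℕ, (∀ m : ℕ, (∃ Q ∈ Cent d L, Q ≠ 0 ∧ HasOrd d Q m) → e ∣ m) → e = 1) ↔
      Nat.card H = n := by
    constructor
    · intro hgcd
      have hdvd : Nat.card H ∣ n := by
        have := AddSubgroup.card_addSubgroup_dvd_card H
        rwa [Nat.card_zmod] at this
      have hpos : 0 < Nat.card H := Nat.card_pos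
      set e := n / Nat.card H with he
      have hne : n = Nat.card H * e := by
        rw [he, Nat.mul_div_cancel' hdvd]
      have hdivall : ∀ m : ℕ, (∃ Q ∈ Cent d L, Q ≠ 0 ∧ HasOrd d Q m) → e ∣ m := by
        intro m hm
        have hmH : (m : ZMod n) ∈ H := hmemH m hm
        have h1 : addOrderOf ((m : ZMod n)) ∣ Nat.card H :=
          AddSubgroup.addOrderOf_dvd_natCard H hmH
        have h3 : ((addOrderOf ((m : ℕ) : ZMod n) : ℕ) : ZMod n) * ((m : ℕ) : ZMod n) = 0 := by
          rw [← nsmul_eq_mul]; exact addOrderOf_nsmul_eq_zero _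
        have h4 : n ∣ addOrderOf ((m : ℕ) : ZMod n) * m := by
          apply (ZMod.natCast_eq_zero_iff _ n).mp
          push_cast
          exact h3
        obtain ⟨t, ht⟩ := h1
        have h5 : n ∣ Nat.card H * m := by
          rw [ht, mul_comm (addOrderOf ((m : ℕ) : ZMod n)) t, mul_assoc]
          exact Dvd.dvd.mul_left h4 t
        have h6 : Nat.card H * e ∣ Nat.card H * m := by
          rw [← hne]; exact h5
        exact (Nat.mul_dvd_mul_iff_left hpos).mp h6
      have he1 : e = 1 := hgcd e hdivall
      rw [he1, mul_one] at hne
      omega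
    · intro hcard
      have hTop : H = ⊤ := by
        haveI : Finite H := Subtype.finite
        apply AddSubgroup.eq_top_of_card_eq
        rw [hcard, Nat.card_zmod]
      intro e hdiv
      have h1H : (1 : ZMod n) ∈ (H : Set (ZMod n)) := by rw [hTop]; trivial
      rw [hH] at h1H
      obtain ⟨Q, hQ, hQ0, m, hord, hm1⟩ := h1H
      have hedvd_m : e ∣ m := hdiv m ⟨Q, hQ, hQ0, hord⟩
      have hedvd_n : e ∣ n := hdiv n ⟨L, hLcent, hL0, hLord⟩
      have hmod : m % n = 1 := by
        have : ((m : ℕ) : ZMod n) = ((1 : ℕ) : ZMod n) := by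
          rw [← hm1]; push_cast; ring
        rw [ZMod.natCast_eq_natCast_iff] at this
        have := Nat.ModEq.symm this
        unfold Nat.ModEq at this
        rw [Nat.mod_eq_of_lt (by omega : 1 < n)] at this
        omega
      have : e ∣ m % n := (Nat.dvd_mod_iff hedvd_n).mpr hedvd_m
      rw [hmod] at this
      exact Nat.dvd_one.mp this
  refine ⟨part1, ?_⟩
  -- Part 2
  intro hcard
  have hTop : H = ⊤ := by
    haveI : Finite H := Subtype.finite
    apply AddSubgroup.eq_top_of_card_eq
    rw [hcard, Nat.card_zmod]
  have hex : ∀ i : ℕ, ∃ m : ℕ, ∃ Q, Q ∈ Cent d L ∧ Q ≠ 0 ∧ HasOrd d Q m ∧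
      (m : ZMod n) = (i : ZMod n) := by
    intro i
    have hmem : ((i : ℕ) : ZMod n) ∈ (H : Set (ZMod n)) := by rw [hTop]; trivial
    rw [hH] at hmem
    obtain ⟨Q, hQ, hQ0, m, hord, hmi⟩ := hmem
    exact ⟨m, Q, hQ, hQ0, hord, hmi.symm⟩
  classical
  set o : ℕ → ℕ := fun i => if i = 0 then 0 else Nat.find (hex i) with ho
  set A : ℕ → AddMonoid.End F := fun i =>
    if i = 0 then 1 else (Nat.find_spec (hex i)).choose with hA
  have hAprop : ∀ i : ℕ, A i ∈ Cent d L ∧ A i ≠ 0 ∧ HasOrd d (A i) (o i) ∧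
      ((o i : ZMod n) = (i : ZMod n)) ∧
      (∀ q : ℕ, (∃ Q, Q ∈ Cent d L ∧ Q ≠ 0 ∧ HasOrd d Q q ∧
        (q : ZMod n) = (i : ZMod n)) → o i ≤ q) := by
    intro i
    by_cases hi : i = 0
    · subst hi
      refine ⟨?_, ?_, ?_, ?_, ?_⟩
      · simp only [hA]; rw [if_pos trivial]; exact cent_one
      · simp only [hA]; rw [if_pos trivial]; exact one_ne_zero_End
      · simp only [hA, ho]; rw [if_pos trivial, if_pos trivial]; exact hasOrd_one
      · simp only [ho]; rw [if_pos trivial]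
      · intro q _; simp only [ho]; rw [if_pos trivial]; omega
    · have hspec := (Nat.find_spec (hex i)).choose_spec
      refine ⟨?_, ?_, ?_, ?_, ?_⟩
      · simp only [hA]; rw [if_neg hi]; exact hspec.1
      · simp only [hA]; rw [if_neg hi]; exact hspec.2.1
      · simp only [hA, ho]; rw [if_neg hi, if_neg hi]; exact hspec.2.2.1
      · simp only [ho]; rw [if_neg hi]; exact hspec.2.2.2
      · intro q ⟨Q, hQ, hQ0, hord, hres⟩
        simp only [ho]; rw [if_neg hi]
        exact Nat.find_min' (hex i) ⟨Q, hQ, hQ0, hord, hres⟩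
  -- leading coefficient data for A i
  have hlcA : ∀ i : ℕ, ∃ a : F, IsLC d (A i) (o i) a ∧ a ≠ 0 ∧ d a = 0 := by
    intro i
    obtain ⟨hc, h0, hord, _, _⟩ := hAprop i
    obtain ⟨a, hlc, ha0⟩ := isLC_of_hasOrd hord h0
    exact ⟨a, hlc, ha0, const_lc hd hn hL hc hlc⟩
  set a : ℕ → F := fun i => (hlcA i).choose with ha
  have haspec : ∀ i, IsLC d (A i) (o i) (a i) ∧ a i ≠ 0 ∧ d (a i) = 0 :=
    fun i => (hlcA i).choose_spec
  refine ⟨A, o, ?_, ?_, ?_, ?_⟩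
  · simp only [hA]; rw [if_pos trivial]
  · intro i _
    obtain ⟨hc, h0, hord, hres, hmin⟩ := hAprop i
    refine ⟨hc, hord, hres, ?_⟩
    intro Q hQ hQ0 q hq hqres
    exact hmin q ⟨Q, hQ, hQ0, hq, hqres.trans hres⟩
  · -- spanning
    have span : ∀ m : ℕ, ∀ Q, Q ∈ Cent d L → Q ∈ OpLE d m →
        ∃ c : ℕ → AddMonoid.End F, (∀ i, c i ∈ CPoly d L) ∧
          Q = ∑ i ∈ Finset.range n, c i * A i := by
      intro m
      induction m using Nat.strong_induction_on with
      | _ m ih =>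
        intro Q hQc hQm
        by_cases hQ0 : Q = 0
        · refine ⟨fun _ => 0, fun i => cpoly_zero, ?_⟩
          rw [hQ0]
          rw [Finset.sum_eq_zero (fun i _ => by rw [zero_mul])]
        · obtain ⟨m₀, hord⟩ := ord_exists hQc.1
          have hm₀m : m₀ ≤ m := hord.2 m hQm
          set i := m₀ % n with hidef
          have hi_lt : i < n := Nat.mod_lt _ (by omega)
          have hres : (m₀ : ZMod n) = (i : ZMod n) := by
            rw [hidef, ZMod.natCast_mod]
          have hle : o i ≤ m₀ :=
            (hAprop i).2.2.2.2 m₀ ⟨Q, hQc, hQ0, hord, hres⟩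
          have hdvd : n ∣ m₀ - o i := by
            have h1 : (o i : ZMod n) = (m₀ : ZMod n) := ((hAprop i).2.2.2.1).trans hres.symm
            rw [ZMod.natCast_eq_natCast_iff] at h1
            exact (Nat.modEq_iff_dvd' hle).mp h1
          set k := (m₀ - o i) / n with hk
          have hm₀eq : m₀ = o i + n * k := by
            rw [hk, Nat.mul_div_cancel' hdvd]
            omega
          obtain ⟨q, hqlc, hq0⟩ := isLC_of_hasOrd hord hQ0
          have hdq : d q = 0 := const_lc hd hn hL hQc hqlc
          set γ := q * (a i)⁻¹ with hγ
          have hdγ : d γ = 0 := by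
            rw [hγ, hd]
            rw [hdq, zero_mul, zero_add, d_inv hd (haspec i).2.1 (haspec i).2.2, mul_zero]
          have hγa : γ * a i = q := by
            rw [hγ, mul_assoc, inv_mul_cancel₀ (haspec i).2.1, mul_one]
          have hlcprod : IsLC d (mulOp γ * L ^ k * A i) m₀ q := by
            have h1 : IsLC d (mulOp γ * L ^ k) (0 + n * k) (γ * 1) :=
              isLC_mul hd (isLC_mulOp γ) (isLC_Lpow hd (by omega) hL k)
            have h2 : IsLC d (mulOp γ * L ^ k * A i) (0 + n * k + o i) (γ * 1 * a i) :=
              isLC_mul hd h1 (haspec i).1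
            rw [Nat.zero_add, mul_one, hγa] at h2
            have he : n * k + o i = m₀ := by omega
            rwa [he] at h2
          set Q' := Q - mulOp γ * L ^ k * A i with hQ'
          have hQ'low : Q' ∈ Low d m₀ := by
            rw [hQ']
            have h1 : Q - mulOp γ * L ^ k * A i =
                (Q - mulOp q * derOp d ^ m₀) -
                (mulOp γ * L ^ k * A i - mulOp q * derOp d ^ m₀) := by abel
            rw [h1]
            exact AddSubgroup.sub_mem _ hqlc hlcprod
          have hQ'cent : Q' ∈ Cent d L := by
            rw [hQ']
            exact cent_sub hQc (cent_mul hd (cent_mul hd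
              (cent_mulOp_const hd hdγ hLop) (cent_pow hd hLcent k)) (hAprop i).1)
          by_cases hQ'0 : Q' = 0
          · refine ⟨fun j => if j = i then mulOp γ * L ^ k else 0, ?_, ?_⟩
            · intro j
              show (if j = i then mulOp γ * L ^ k else 0) ∈ CPoly d L
              by_cases h : j = i
              · rw [if_pos h]; exact cpoly_single hdγ k
              · rw [if_neg h]; exact cpoly_zero
            · have hQeq : Q = mulOp γ * L ^ k * A i := by
                have := sub_eq_zero.mp (hQ' ▸ hQ'0)
                exact this
              rw [hQeq]
              show mulOp γ * L ^ k * A i =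
                ∑ j ∈ Finset.range n, (if j = i then mulOp γ * L ^ k else 0) * A j
              have e1 : ∀ j ∈ Finset.range n,
                  (if j = i then mulOp γ * L ^ k else 0) * A j =
                  if j = i then mulOp γ * L ^ k * A j else 0 := by
                intro j _
                by_cases h : j = i
                · rw [if_pos h, if_pos h]
                · rw [if_neg h, if_neg h, zero_mul]
              rw [Finset.sum_congr rfl e1,
                Finset.sum_ite_eq' (Finset.range n) i (fun j => mulOp γ * L ^ k * A j),
                if_pos (Finset.mem_range.mpr hi_lt)]
          · have hm₀pos : 1 ≤ m₀ := by
              by_contra h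
              push_neg at h
              have : m₀ = 0 := by omega
              rw [this] at hQ'low
              exact hQ'0 (by simpa [Low] using hQ'low)
            have hQ'op : Q' ∈ OpLE d (m₀ - 1) := by
              rw [← low_eq hm₀pos]
              exact hQ'low
            obtain ⟨c', hc', hQ'eq⟩ := ih (m₀ - 1) (by omega) Q' hQ'cent hQ'op
            refine ⟨fun j => c' j + if j = i then mulOp γ * L ^ k else 0, ?_, ?_⟩
            · intro j
              show c' j + (if j = i then mulOp γ * L ^ k else 0) ∈ CPoly d L
              apply cpoly_add (hc' j)
              by_cases h : j = i
              · rw [if_pos h]; exact cpoly_single hdγ k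
              · rw [if_neg h]; exact cpoly_zero
            · have hQeq : Q = Q' + mulOp γ * L ^ k * A i := by rw [hQ']; abel
              rw [hQeq, hQ'eq]
              have e0 : ∀ j ∈ Finset.range n,
                  (c' j + if j = i then mulOp γ * L ^ k else 0) * A j =
                  c' j * A j + (if j = i then mulOp γ * L ^ k else 0) * A j := by
                intro j _; rw [add_mul]
              rw [Finset.sum_congr rfl e0, Finset.sum_add_distrib]
              congr 1
              have e1 : ∀ j ∈ Finset.range n,
                  (if j = i then mulOp γ * L ^ k else 0) * A j =
                  if j = i then mulOp γ * L ^ k * A j else 0 := by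
                intro j _
                by_cases h : j = i
                · rw [if_pos h, if_pos h]
                · rw [if_neg h, if_neg h, zero_mul]
              rw [Finset.sum_congr rfl e1,
                Finset.sum_ite_eq' (Finset.range n) i (fun j => mulOp γ * L ^ k * A j),
                if_pos (Finset.mem_range.mpr hi_lt)]
    intro Q hQ
    obtain ⟨m, hm⟩ := hQ.1
    exact span m Q hQ hm
  · -- independence
    intro c hc hsum
    by_contra hcon
    push_neg at hcon
    obtain ⟨i₀, hi₀n, hi₀⟩ := hcon
    set T := (Finset.range n).filter (fun i => c i ≠ 0) with hT
    have hTne : T.Nonempty := ⟨i₀, Finset.mem_filter.mpr ⟨Finset.mem_range.mpr hi₀n, hi₀⟩⟩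
    -- order data for nonzero terms
    have hterm : ∀ i ∈ T, ∃ (D : ℕ) (β : F),
        IsLC d (c i * A i) (n * D + o i) (β * a i) ∧ β ≠ 0 := by
      intro i hi
      obtain ⟨D, β, hlc, hβ0, _⟩ :=
        cpoly_ord hd (by omega) hL (hc i) (Finset.mem_filter.mp hi).2
      exact ⟨D, β, isLC_mul hd hlc (haspec i).1, hβ0⟩
    set ordt : ℕ → ℕ := fun i =>
      if h : i ∈ T then n * (hterm i h).choose + o i else 0 with hordt
    have hordspec : ∀ i (h : i ∈ T), ∃ β : F,
        IsLC d (c i * A i) (ordt i) (β * a i) ∧ β ≠ 0 := by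
      intro i h
      obtain ⟨β, hlc, hβ⟩ := (hterm i h).choose_spec
      refine ⟨β, ?_, hβ⟩
      simp only [hordt]
      simpa [h] using hlc
    have hres : ∀ i ∈ T, ((ordt i : ZMod n) = (i : ZMod n)) := by
      intro i h
      simp only [hordt]
      simp only [h, dif_pos]
      push_cast
      rw [ZMod.natCast_self]
      have := (hAprop i).2.2.2.1
      rw [this]
      ring
    -- orders are distinct across T
    have hdist : ∀ i ∈ T, ∀ j ∈ T, ordt i = ordt j → i = j := by
      intro i hi j hj he
      have h1 : (i : ZMod n) = (j : ZMod n) := by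
        rw [← hres i hi, ← hres j hj, he]
      rw [ZMod.natCast_eq_natCast_iff] at h1
      have hi' : i < n := Finset.mem_range.mp (Finset.mem_filter.mp hi).1
      have hj' : j < n := Finset.mem_range.mp (Finset.mem_filter.mp hj).1
      have := h1
      unfold Nat.ModEq at this
      rw [Nat.mod_eq_of_lt hi', Nat.mod_eq_of_lt hj'] at this
      exact this
    obtain ⟨j, hjT, hjmax⟩ := Finset.exists_max_image T ordt hTne
    obtain ⟨β, hβlc, hβ0⟩ := hordspec j hjT
    -- c j * A j lies in Low (ordt j)
    have hjn : j ∈ Finset.range n := (Finset.mem_filter.mp hjT).1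
    have hsplit := Finset.sum_eq_sum_sdiff_singleton_add hjn (fun i => c i * A i)
    rw [hsplit] at hsum
    have hsum2 : c j * A j = -∑ i ∈ Finset.range n \ {j}, c i * A i :=
      eq_neg_of_add_eq_zero_right hsum
    have hrest : (∑ i ∈ Finset.range n \ {j}, c i * A i) ∈ Low d (ordt j) := by
      apply AddSubgroup.sum_mem
      intro i hi
      obtain ⟨hiN, hij'⟩ := Finset.mem_sdiff.mp hi
      have hij : i ≠ j := by simpa using hij'
      by_cases hci : c i = 0
      · rw [hci, zero_mul]; exact zero_mem _
      · have hiT : i ∈ T := Finset.mem_filter.mpr ⟨hiN, hci⟩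
        obtain ⟨β', hlc', hβ'⟩ := hordspec i hiT
        have hlt : ordt i < ordt j := by
          have hle := hjmax i hiT
          rcases lt_or_eq_of_le hle with h | h
          · exact h
          · exact absurd (hdist i hiT j hjT h) hij
        exact opLE_le_low hlt (isLC_opLE hlc')
    have hmem : c j * A j ∈ Low d (ordt j) := by
      rw [hsum2]; exact AddSubgroup.neg_mem _ hrest
    have hfin : mulOp (β * a j) * derOp d ^ (ordt j) ∈ Low d (ordt j) := by
      have h1 : mulOp (β * a j) * derOp d ^ (ordt j) =
          c j * A j - (c j * A j - mulOp (β * a j) * derOp d ^ (ordt j)) := by abel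
      rw [h1]; exact AddSubgroup.sub_mem _ hmem hβlc
    have := ind hd hx _ _ hfin
    exact (mul_ne_zero hβ0 (haspec j).2.1) this


/-- For `L` monic of order `n ≥ 2`, `L` is algebro-geometric
(`rank Z(L) = 1`, i.e. the gcd of the orders of nonzero elements of `Z(L)` is `1`) if and
only if `n = |O|`; and in that case `Z(L)` has a `C[L]`-basis `A_0 = 1, ..., A_{n−1}` with
`ord(A_i) ≡ i (mod n)`. -/
theorem algebro_geometric_iff_card_orders {F : Type} [Field F] [CharZero F]
    (d : F →+ F) (hd : IsDeriv d) (L : AddMonoid.End F) (n : ℕ) (hn : 2 ≤ n)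
    (hL : MonicOrd d L n) (H : AddSubgroup (ZMod n))
    (hH : (H : Set (ZMod n)) =
      {x | ∃ Q ∈ Cent d L, Q ≠ 0 ∧ ∃ m : ℕ, HasOrd d Q m ∧ x = (m : ZMod n)}) :
    ((∀ e : ℕ, (∀ m : ℕ, (∃ Q ∈ Cent d L, Q ≠ 0 ∧ HasOrd d Q m) → e ∣ m) → e = 1) ↔
      Nat.card H = n) ∧
    (Nat.card H = n →
      ∃ (A : ℕ → AddMonoid.End F) (o : ℕ → ℕ),
        A 0 = 1 ∧
        (∀ i < n, A i ∈ Cent d L ∧ HasOrd d (A i) (o i) ∧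
          ((o i : ZMod n) = (i : ZMod n)) ∧
          (∀ Q ∈ Cent d L, Q ≠ 0 → ∀ q : ℕ, HasOrd d Q q →
            (q : ZMod n) = (o i : ZMod n) → o i ≤ q)) ∧
        (∀ Q ∈ Cent d L, ∃ c : ℕ → AddMonoid.End F,
          (∀ i, c i ∈ CPoly d L) ∧ Q = ∑ i ∈ Finset.range n, c i * A i) ∧
        (∀ c : ℕ → AddMonoid.End F, (∀ i, c i ∈ CPoly d L) →
          ∑ i ∈ Finset.range n, c i * A i = 0 → ∀ i < n, c i = 0)) := by
  exact main_statement d hd L n hn hL H hH
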